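/- Let n ≥ 3 and let 1 < d_1 < ⋯ < d_m < n (m ≥ 0). Then the finishing set of δ_{d_1,…,d_m} is F(δ_{d_1,…,d_m}) = { j ∈ {1,…,n−1} : j ∈ {1} ∪ D and j+1 ∉ D }. -/

import Mathlib

/-- Relations for the braid group on `n` strands, with generators `σ_1, …, σ_{n-1}`
(generators with indices outside `{1, …, n-1}` are killed). -/
def braidRels (n : ℕ) : Set (FreeGroup ℕ) :=
  { r | (∃ i : ℕ, 1 ≤ i ∧ i + 2 ≤ n ∧
          r = FreeGroup.of i * FreeGroup.of (i + 1) * FreeGroup.of i *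
              (FreeGroup.of (i + 1) * FreeGroup.of i * FreeGroup.of (i + 1))⁻¹) ∨
       (∃ i j : ℕ, 1 ≤ i ∧ i + 2 ≤ j ∧ j + 1 ≤ n ∧
          r = FreeGroup.of i * FreeGroup.of j * (FreeGroup.of j * FreeGroup.of i)⁻¹) ∨
       (∃ i : ℕ, (i = 0 ∨ n ≤ i) ∧ r = FreeGroup.of i) }

/-- The braid group `B_n` on `n` strands. -/
abbrev B (n : ℕ) : Type := PresentedGroup (braidRels n)

/-- The Artin generator `σ_i` of `B n`. -/
def σb (n i : ℕ) : B n := PresentedGroup.of i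

/-- The element of `B n` represented by a word in the generators. -/
def word (n : ℕ) (l : List ℕ) : B n := (l.map (σb n)).prod

/-- The positive braid monoid `B_n^+`. -/
def Bpos (n : ℕ) : Submonoid (B n) :=
  Submonoid.closure { x | ∃ i : ℕ, 1 ≤ i ∧ i ≤ n - 1 ∧ x = σb n i }

/-- The prefix order: `a ≼ b`. -/
def bLe (n : ℕ) (a b : B n) : Prop := a⁻¹ * b ∈ Bpos n

/-- The suffix order: `a ≽ b`. -/
def bGe (n : ℕ) (a b : B n) : Prop := a * b⁻¹ ∈ Bpos n

/-- The list `[a, a-1, …, b]` (empty if `a < b`). -/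
def descList (a b : ℕ) : List ℕ := (List.range' b (a + 1 - b)).reverse

/-- The Garside element `Δ_n = σ_1 (σ_2 σ_1) ⋯ (σ_{n-1} σ_{n-2} ⋯ σ_1)`. -/
def DeltaB (n : ℕ) : B n :=
  word n (((List.range' 1 (n - 1)).map fun t => descList t 1).flatten)

/-- The element `δ = σ_1 σ_2 ⋯ σ_{n-1}`. -/
def deltaB (n : ℕ) : B n := word n (List.range' 1 (n - 1))

/-- Simple elements: positive prefixes of `Δ_n`. -/
def isSimple (n : ℕ) (s : B n) : Prop := s ∈ Bpos n ∧ bLe n s (DeltaB n)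

/-- The starting set `S(a) = {i : σ_i ≼ a}`. -/
def startSet (n : ℕ) (a : B n) : Set ℕ :=
  { i | 1 ≤ i ∧ i ≤ n - 1 ∧ bLe n (σb n i) a }

/-- The finishing set `F(a) = {i : a ≽ σ_i}`. -/
def finishSet (n : ℕ) (a : B n) : Set ℕ :=
  { i | 1 ≤ i ∧ i ≤ n - 1 ∧ bGe n a (σb n i) }

/-- The simple conjugate `δ_{d_1,…,d_m}` of `δ`, where `l = [d_1, …, d_m]`. -/
def deltaD (n : ℕ) (l : List ℕ) : B n :=
  word n ((((1 :: l).zip (l ++ [n])).map fun p => descList (p.2 - 1) p.1).flatten)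

/-- The simple element `α_{i,j}`. -/
def alphaB (n i j : ℕ) : B n :=
  if i ≤ j then word n (List.range' i (j + 1 - i)) else word n (descList i j)

/-- The conjugate `x_{η,i_1,…,i_{l+1}} = w⁻¹ η w`, `w = α_{i_1,i_2} α_{i_2,i_3} ⋯ α_{i_l,i_{l+1}}`. -/
def xbraid (n : ℕ) (η : B n) (i : ℕ → ℕ) (l : ℕ) : B n :=
  (((List.range l).map fun idx => alphaB n (i (idx + 1)) (i (idx + 2))).prod)⁻¹ * η *
    ((List.range l).map fun idx => alphaB n (i (idx + 1)) (i (idx + 2))).prod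

/-- A left-weighted sequence of proper simple factors. -/
def LWSeq (n : ℕ) (ys : List (B n)) : Prop :=
  (∀ y ∈ ys, isSimple n y ∧ y ≠ 1 ∧ y ≠ DeltaB n) ∧
  List.Chain' (fun a b => startSet n b ⊆ finishSet n a) ys

section Aux

lemma word_nil (n : ℕ) : word n [] = 1 := rfl

lemma word_cons (n i : ℕ) (L : List ℕ) : word n (i :: L) = σb n i * word n L := by
  simp [word]

lemma word_append (n : ℕ) (L M : List ℕ) : word n (L ++ M) = word n L * word n M := by
  simp [word]

lemma rel_one {n : ℕ} {r : FreeGroup ℕ} (hr : r ∈ braidRels n) :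
    PresentedGroup.mk (braidRels n) r = 1 :=
  (QuotientGroup.eq_one_iff r).2 (Subgroup.subset_normalClosure hr)

lemma sigma_comm {n i j : ℕ} (h1 : 1 ≤ i) (h2 : i + 2 ≤ j) (h3 : j + 1 ≤ n) :
    σb n i * σb n j = σb n j * σb n i := by
  have hr : FreeGroup.of i * FreeGroup.of j * (FreeGroup.of j * FreeGroup.of i)⁻¹ ∈ braidRels n :=
    Or.inr (Or.inl ⟨i, j, h1, h2, h3, rfl⟩)
  have h := rel_one hr
  rw [map_mul, map_inv, map_mul, map_mul] at h
  have h' : σb n i * σb n j * (σb n j * σb n i)⁻¹ = 1 := h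
  rw [mul_inv_eq_one] at h'
  exact h'

end Aux
/-- generator images in the symmetric group -/
def pf (n i : ℕ) : Equiv.Perm ℕ := if 1 ≤ i ∧ i ≤ n - 1 then Equiv.swap i (i + 1) else 1

lemma pf_rels (n : ℕ) : ∀ r ∈ braidRels n, FreeGroup.lift (pf n) r = 1 := by
  rintro r (⟨i, h1, h2, rfl⟩ | ⟨i, j, h1, h2, h3, rfl⟩ | ⟨i, hi, rfl⟩)
  · have e1 : pf n i = Equiv.swap i (i + 1) := if_pos ⟨h1, by omega⟩
    have e2 : pf n (i + 1) = Equiv.swap (i + 1) (i + 2) := if_pos ⟨by omega, by omega⟩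
    simp only [map_mul, map_inv, FreeGroup.lift_apply_of, e1, e2, mul_inv_eq_one]
    have l1 := Equiv.swap_mul_swap_mul_swap (x := i+2) (y := i+1) (z := i)
      (by omega) (by omega)
    have l2 := Equiv.swap_mul_swap_mul_swap (x := i) (y := i+1) (z := i+2)
      (by omega) (by omega)
    rw [Equiv.swap_comm (i+1) i, Equiv.swap_comm (i+2) (i+1)] at l1
    rw [l1, l2, Equiv.swap_comm]
  · have e1 : pf n i = Equiv.swap i (i + 1) := if_pos ⟨h1, by omega⟩
    have e2 : pf n j = Equiv.swap j (j + 1) := if_pos ⟨by omega, by omega⟩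
    simp only [map_mul, map_inv, FreeGroup.lift_apply_of, e1, e2, mul_inv_eq_one]
    have hd : (Equiv.swap i (i+1)).Disjoint (Equiv.swap j (j+1)) := by
      intro x
      by_cases hx : x = i ∨ x = i + 1
      · right; exact Equiv.swap_apply_of_ne_of_ne (by omega) (by omega)
      · push_neg at hx
        left; exact Equiv.swap_apply_of_ne_of_ne (by omega) (by omega)
    exact hd.commute.eq
  · have e1 : pf n i = 1 := if_neg (by omega)
    simp only [FreeGroup.lift_apply_of, e1]

/-- the permutation homomorphism -/
def Pi (n : ℕ) : B n →* Equiv.Perm ℕ := PresentedGroup.toGroup (pf_rels n)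

lemma Pi_sigma (n i : ℕ) : Pi n (σb n i) = pf n i := PresentedGroup.toGroup.of _

/-- generator images for the exponent sum -/
def ef (n i : ℕ) : Multiplicative ℤ := Multiplicative.ofAdd (if 1 ≤ i ∧ i ≤ n - 1 then (1 : ℤ) else 0)

lemma ef_rels (n : ℕ) : ∀ r ∈ braidRels n, FreeGroup.lift (ef n) r = 1 := by
  rintro r (⟨i, h1, h2, rfl⟩ | ⟨i, j, h1, h2, h3, rfl⟩ | ⟨i, hi, rfl⟩)
  · have e1 : ef n i = Multiplicative.ofAdd (1 : ℤ) := by rw [ef, if_pos ⟨h1, by omega⟩]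
    have e2 : ef n (i + 1) = Multiplicative.ofAdd (1 : ℤ) := by rw [ef, if_pos ⟨by omega, by omega⟩]
    simp only [map_mul, map_inv, FreeGroup.lift_apply_of, e1, e2, mul_inv_eq_one]
  · have e1 : ef n i = Multiplicative.ofAdd (1 : ℤ) := by rw [ef, if_pos ⟨h1, by omega⟩]
    have e2 : ef n j = Multiplicative.ofAdd (1 : ℤ) := by rw [ef, if_pos ⟨by omega, by omega⟩]
    simp only [map_mul, map_inv, FreeGroup.lift_apply_of, e1, e2]
    rw [mul_inv_eq_one]
  · have e1 : ef n i = Multiplicative.ofAdd (0 : ℤ) := by rw [ef, if_neg (by omega)]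
    simp only [FreeGroup.lift_apply_of, e1, ofAdd_zero]

/-- the exponent-sum homomorphism -/
def Ee (n : ℕ) : B n →* Multiplicative ℤ := PresentedGroup.toGroup (ef_rels n)

lemma Ee_sigma (n i : ℕ) : Ee n (σb n i) = ef n i := PresentedGroup.toGroup.of _

lemma Ee_word (n : ℕ) (L : List ℕ) (hL : ∀ i ∈ L, 1 ≤ i ∧ i ≤ n - 1) :
    Ee n (word n L) = Multiplicative.ofAdd (L.length : ℤ) := by
  induction L with
  | nil => simp [word_nil]
  | cons a L ih =>
    rw [word_cons, map_mul, Ee_sigma, ih (fun i hi => hL i (List.mem_cons_of_mem a hi))]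
    rw [ef, if_pos (hL a (List.mem_cons_self))]
    rw [← ofAdd_add]
    congr 1
    simp [List.length_cons]
    ring

lemma Pi_word (n : ℕ) (L : List ℕ) : Pi n (word n L) = (L.map (pf n)).prod := by
  induction L with
  | nil => simp [word_nil]
  | cons a L ih => rw [word_cons, map_mul, Pi_sigma, List.map_cons, List.prod_cons, ih]
/-- the list of generator indices of `δ_D`, written recursively -/
def segs (n a : ℕ) : List ℕ → List ℕ
  | [] => descList (n - 1) a
  | c :: t => descList (c - 1) a ++ segs n c t

lemma descList_nil {a b : ℕ} (h : a < b) : descList a b = [] := by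
  rw [descList]
  have : a + 1 - b = 0 := by omega
  rw [this]
  rfl

lemma descList_split {a b : ℕ} (h : b ≤ a) : descList a b = descList a (b + 1) ++ [b] := by
  have h1 : a + 1 - b = (a + 1 - (b + 1)) + 1 := by omega
  rw [descList, descList, h1, List.range'_succ, List.reverse_cons]

lemma descList_mem {a b i : ℕ} (h : i ∈ descList a b) : b ≤ i ∧ i ≤ a := by
  rw [descList, List.mem_reverse, List.mem_range'_1] at h
  omega

lemma descList_length {a b : ℕ} (h : b ≤ a + 1) : (descList a b).length = a + 1 - b := by
  rw [descList, List.length_reverse, List.length_range']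

lemma chain_head_lt {a : ℕ} {l : List ℕ} (h : List.Chain' (· < ·) (a :: l)) :
    ∀ x ∈ l, a < x := by
  replace h := List.isChain_iff_pairwise.1 h
  exact fun x hx => (List.pairwise_cons.1 h).1 x hx

lemma chain_tail {a : ℕ} {l : List ℕ} (h : List.Chain' (· < ·) (a :: l)) :
    List.Chain' (· < ·) l :=
  h.tail

lemma segs_mem {n : ℕ} (l : List ℕ) : ∀ a, 1 ≤ a → List.Chain' (· < ·) (a :: (l ++ [n])) →
    ∀ i ∈ segs n a l, a ≤ i ∧ i ≤ n - 1 := by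
  induction l with
  | nil =>
    intro a ha hc i hi
    have := descList_mem hi
    have han : a < n := chain_head_lt hc n (by simp)
    omega
  | cons c t ih =>
    intro a ha hc i hi
    rw [segs, List.mem_append] at hi
    have hac : a < c := chain_head_lt hc c (by simp)
    have hcn : c < n := by
      have := chain_head_lt hc
      have hcc : List.Chain' (· < ·) (c :: (t ++ [n])) := chain_tail hc
      exact chain_head_lt hcc n (by simp)
    rcases hi with hi | hi
    · have := descList_mem hi
      omega
    · have := ih c (by omega) (chain_tail hc) i hi
      omega

lemma segs_length {n : ℕ} (l : List ℕ) : ∀ a, 1 ≤ a → List.Chain' (· < ·) (a :: (l ++ [n])) →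
    (segs n a l).length = n - a := by
  induction l with
  | nil =>
    intro a ha hc
    have han : a < n := chain_head_lt hc n (by simp)
    rw [segs, descList_length (by omega)]
    omega
  | cons c t ih =>
    intro a ha hc
    have hac : a < c := chain_head_lt hc c (by simp)
    have hcn : c < n := chain_head_lt (chain_tail hc) n (by simp)
    rw [segs, List.length_append, descList_length (by omega),
      ih c (by omega) (chain_tail hc)]
    omega

lemma segs_zipflat (n : ℕ) (l : List ℕ) : ∀ a,
    (((a :: l).zip (l ++ [n])).map fun p => descList (p.2 - 1) p.1).flatten = segs n a l := by
  induction l with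
  | nil => intro a; simp [segs]
  | cons c t ih =>
    intro a
    have : (c :: t) ++ [n] = c :: (t ++ [n]) := rfl
    rw [this, List.zip_cons_cons, List.map_cons, List.flatten_cons, ih c, segs]

lemma deltaD_eq_segs (n : ℕ) (l : List ℕ) : deltaD n l = word n (segs n 1 l) := by
  rw [deltaD, segs_zipflat]

lemma segs_split {n : ℕ} (l : List ℕ) : ∀ a, 1 ≤ a → List.Chain' (· < ·) (a :: (l ++ [n])) →
    ∀ j, (j = a ∨ j ∈ l) → j + 1 ∉ l →
    ∃ A B, segs n a l = A ++ j :: B ∧ ∀ i ∈ B, j + 2 ≤ i := by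
  induction l with
  | nil =>
    intro a ha hc j hj _
    have han : a < n := chain_head_lt hc n (by simp)
    rcases hj with rfl | hj
    · refine ⟨descList (n - 1) (j + 1), [], ?_, by simp⟩
      rw [segs, descList_split (by omega)]
    · simp at hj
  | cons c t ih =>
    intro a ha hc j hj hj1
    have hac : a < c := chain_head_lt hc c (by simp)
    have hcn : c < n := chain_head_lt (chain_tail hc) n (by simp)
    rcases hj with rfl | hj
    · -- j = a : split inside the first block
      have hcj : j + 2 ≤ c := by
        have : c ≠ j + 1 := fun h => hj1 (by simp [h.symm])
        omega
      refine ⟨descList (c - 1) (j + 1), segs n c t, ?_, ?_⟩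
      · rw [segs, descList_split (by omega), List.append_assoc]
        rfl
      · intro i hi
        have := segs_mem t c (by omega) (chain_tail hc) i hi
        omega
    · obtain ⟨A, B, hAB, hB⟩ := ih c (by omega) (chain_tail hc) j
        (List.mem_cons.1 hj)
        (fun h => hj1 (List.mem_cons_of_mem c h))
      exact ⟨descList (c - 1) a ++ A, B, by rw [segs, hAB, List.append_assoc], hB⟩
lemma swap_eval (j z : ℕ) :
    Equiv.swap j (j + 1) z = if z = j then j + 1 else if z = j + 1 then j else z := by
  split_ifs with h1 h2
  · rw [h1]; exact Equiv.swap_apply_left _ _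
  · rw [h2]; exact Equiv.swap_apply_right _ _
  · exact Equiv.swap_apply_of_ne_of_ne h1 h2

lemma desc_facts {n : ℕ} : ∀ (k a c : ℕ), c = a + k → 1 ≤ a → c ≤ n →
    (∀ y, y < a ∨ c < y → Pi n (word n (descList (c - 1) a)) y = y) ∧
    Pi n (word n (descList (c - 1) a)) a = c ∧
    (∀ y, a < y → y ≤ c → Pi n (word n (descList (c - 1) a)) y = y - 1) := by
  intro k
  induction k with
  | zero =>
    intro a c hc ha hcn
    have hca : c = a := by omega
    subst hca
    have h0 : descList (c - 1) c = [] := descList_nil (by omega)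
    rw [h0]
    have h1 : Pi n (word n ([] : List ℕ)) = 1 := by rw [word_nil, map_one]
    rw [h1]
    exact ⟨fun y _ => rfl, rfl, fun y hy hy' => by omega⟩
  | succ k ih =>
    intro a c hc ha hcn
    have hac : a < c := by omega
    have hsplit : descList (c - 1) a = descList (c - 1) (a + 1) ++ [a] :=
      descList_split (by omega)
    have hσ : Pi n (σb n a) = Equiv.swap a (a + 1) := by
      rw [Pi_sigma, pf, if_pos ⟨ha, by omega⟩]
    obtain ⟨ih1, ih2, ih3⟩ := ih (a + 1) c (by omega) (by omega) hcn
    have happ : ∀ y, Pi n (word n (descList (c - 1) a)) y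
        = Pi n (word n (descList (c - 1) (a + 1))) (Equiv.swap a (a + 1) y) := by
      intro y
      rw [hsplit, word_append, map_mul]
      have : word n [a] = σb n a := by simp [word]
      rw [this, hσ]
      rfl
    refine ⟨?_, ?_, ?_⟩
    · intro y hy
      rw [happ y, Equiv.swap_apply_of_ne_of_ne (by omega) (by omega)]
      exact ih1 y (by omega)
    · rw [happ a, Equiv.swap_apply_left]
      exact ih2
    · intro y hy hy'
      rw [happ y]
      by_cases h : y = a + 1
      · subst h
        rw [Equiv.swap_apply_right]
        have := ih1 a (Or.inl (by omega))
        omega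
      · rw [Equiv.swap_apply_of_ne_of_ne (by omega) (by omega)]
        exact ih3 y (by omega) hy'

lemma segs_facts {n : ℕ} (l : List ℕ) : ∀ a, 1 ≤ a → List.Chain' (· < ·) (a :: (l ++ [n])) →
    (∀ y, y < a → Pi n (word n (segs n a l)) y = y) ∧
    (∀ p ∈ (a :: l).zip (l ++ [n]), Pi n (word n (segs n a l)) p.1 = p.2) ∧
    (∀ y, a < y → y ≤ n → y ∉ l → Pi n (word n (segs n a l)) y < y) ∧
    (∀ y, a < y → y ≤ n → y ∉ l → y - 1 ∉ l → Pi n (word n (segs n a l)) y = y - 1) := by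
  induction l with
  | nil =>
    intro a ha hc
    have han : a < n := chain_head_lt hc n (by simp)
    obtain ⟨d1, d2, d3⟩ := desc_facts (n := n) (n - a) a n (by omega) ha (le_refl n)
    have hs : segs n a [] = descList (n - 1) a := rfl
    rw [hs]
    refine ⟨fun y hy => d1 y (Or.inl hy), ?_, ?_, ?_⟩
    · intro p hp
      simp only [List.nil_append, List.zip_cons_cons, List.zip_nil_left, List.mem_singleton] at hp
      subst hp
      exact d2
    · intro y hy hy' _
      rw [d3 y hy hy']
      omega
    · intro y hy hy' _ _
      exact d3 y hy hy'
  | cons c t ih =>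
    intro a ha hc
    have hac : a < c := chain_head_lt hc c (by simp)
    have hcc : List.Chain' (· < ·) (c :: (t ++ [n])) := chain_tail hc
    have hcn : c < n := chain_head_lt hcc n (by simp)
    obtain ⟨ih1, ih2, ih3, ih4⟩ := ih c (by omega) hcc
    obtain ⟨d1, d2, d3⟩ := desc_facts (n := n) (c - a) a c (by omega) ha (by omega)
    have happ : ∀ y, Pi n (word n (segs n a (c :: t))) y
        = Pi n (word n (descList (c - 1) a)) (Pi n (word n (segs n c t)) y) := by
      intro y
      have hs : segs n a (c :: t) = descList (c - 1) a ++ segs n c t := rfl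
      rw [hs, word_append, map_mul]
      rfl
    have hginj := (Pi n (word n (segs n c t))).injective
    have hga : Pi n (word n (segs n c t)) a = a := ih1 a hac
    refine ⟨?_, ?_, ?_, ?_⟩
    · intro y hy
      rw [happ y, ih1 y (by omega)]
      exact d1 y (Or.inl hy)
    · intro p hp
      have hzip : (a :: c :: t).zip ((c :: t) ++ [n])
          = (a, c) :: ((c :: t).zip (t ++ [n])) := rfl
      rw [hzip, List.mem_cons] at hp
      rcases hp with rfl | hp
      · rw [happ a, hga]
        exact d2
      · rw [happ p.1, ih2 p hp]
        have hp2 : p.2 ∈ t ++ [n] := (List.of_mem_zip hp).2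
        exact d1 p.2 (Or.inr (chain_head_lt hcc p.2 hp2))
    · intro y hy hyn hyl
      have hyc : y ≠ c := fun h => hyl (by simp [h])
      have hyt : y ∉ t := fun h => hyl (List.mem_cons_of_mem c h)
      rw [happ y]
      by_cases hlt : y < c
      · rw [ih1 y hlt, d3 y hy (by omega)]
        omega
      · have hcy : c < y := by omega
        have hw : Pi n (word n (segs n c t)) y < y := ih3 y hcy hyn hyt
        set w := Pi n (word n (segs n c t)) y with hwdef
        have hwa : w ≠ a := by
          intro h
          exact absurd (hginj (h.trans hga.symm)) (by omega)
        by_cases hw2 : w < a ∨ c < w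
        · rw [d1 w hw2]; omega
        · push_neg at hw2
          rw [d3 w (by omega) (by omega)]
          omega
    · intro y hy hyn hyl hyl1
      have hyc : y ≠ c := fun h => hyl (by simp [h])
      have hyt : y ∉ t := fun h => hyl (List.mem_cons_of_mem c h)
      have hyt1 : y - 1 ∉ t := fun h => hyl1 (List.mem_cons_of_mem c h)
      have hyc1 : y - 1 ≠ c := fun h => hyl1 (by simp [h])
      rw [happ y]
      by_cases hlt : y < c
      · rw [ih1 y hlt]
        exact d3 y hy (by omega)
      · have hcy : c < y := by omega
        rw [ih4 y hcy hyn hyt hyt1]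
        exact d1 (y - 1) (Or.inr (by omega))

lemma swap_range {n i : ℕ} (h1 : 1 ≤ i) (h2 : i + 1 ≤ n) (z : ℕ) :
    (1 ≤ Equiv.swap i (i + 1) z ∧ Equiv.swap i (i + 1) z ≤ n) ↔ (1 ≤ z ∧ z ≤ n) := by
  rw [swap_eval]
  split_ifs <;> omega

lemma word_range {n : ℕ} (L : List ℕ) (hL : ∀ i ∈ L, 1 ≤ i ∧ i ≤ n - 1) (y : ℕ) :
    (1 ≤ Pi n (word n L) y ∧ Pi n (word n L) y ≤ n) ↔ (1 ≤ y ∧ y ≤ n) := by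
  induction L generalizing y with
  | nil =>
    rw [word_nil, map_one]
    rfl
  | cons i L ihL =>
    have hi := hL i (List.mem_cons_self)
    have hσ : Pi n (σb n i) = Equiv.swap i (i + 1) := by
      rw [Pi_sigma, pf, if_pos hi]
    have : Pi n (word n (i :: L)) y = Equiv.swap i (i + 1) (Pi n (word n L) y) := by
      rw [word_cons, map_mul, hσ]
      rfl
    rw [this, swap_range hi.1 (by omega)]
    exact ihL (fun j hj => hL j (List.mem_cons_of_mem i hj)) y
/-- number of inversions of a permutation on `{1, …, n}` -/
def invNum (n : ℕ) (g : Equiv.Perm ℕ) : ℕ :=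
  (((Finset.Icc 1 n) ×ˢ (Finset.Icc 1 n)).filter fun p => p.1 < p.2 ∧ g p.2 < g p.1).card

lemma invNum_one (n : ℕ) : invNum n 1 = 0 := by
  rw [invNum, Finset.card_eq_zero, Finset.filter_eq_empty_iff]
  rintro p _ ⟨h1, h2⟩
  simp only [Equiv.Perm.one_apply] at h2
  omega

lemma invA {n j : ℕ} (g : Equiv.Perm ℕ) (h1 : 1 ≤ j) (h2 : j + 1 ≤ n) :
    invNum n (g * Equiv.swap j (j + 1)) ≤ invNum n g + 1 := by
  classical
  set T := ((Finset.Icc 1 n ×ˢ Finset.Icc 1 n).filter fun p : ℕ × ℕ =>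
    p.1 < p.2 ∧ (g * Equiv.swap j (j + 1)) p.2 < (g * Equiv.swap j (j + 1)) p.1) with hT
  set S := ((Finset.Icc 1 n ×ˢ Finset.Icc 1 n).filter fun p : ℕ × ℕ =>
    p.1 < p.2 ∧ g p.2 < g p.1) with hS
  have key : (T.erase (j, j + 1)).card ≤ S.card := by
    apply Finset.card_le_card_of_injOn
      (fun p => (Equiv.swap j (j + 1) p.1, Equiv.swap j (j + 1) p.2))
    · intro p hp
      rw [Finset.mem_coe, Finset.mem_erase] at hp
      obtain ⟨hpne, hpT⟩ := hp
      rw [hT, Finset.mem_filter, Finset.mem_product, Finset.mem_Icc, Finset.mem_Icc] at hpT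
      obtain ⟨⟨hr1, hr2⟩, hlt, hinv⟩ := hpT
      have hne' : ¬(p.1 = j ∧ p.2 = j + 1) := by
        intro h; exact hpne (Prod.ext h.1 h.2)
      have e1 := swap_eval j p.1
      have e2 := swap_eval j p.2
      rw [hS, Finset.mem_coe, Finset.mem_filter, Finset.mem_product, Finset.mem_Icc, Finset.mem_Icc]
      dsimp only
      have hinv' : g (Equiv.swap j (j + 1) p.2) < g (Equiv.swap j (j + 1) p.1) := hinv
      refine ⟨⟨?_, ?_⟩, ?_, hinv'⟩
      · constructor <;> (rw [e1]; split_ifs at e1 ⊢ <;> omega)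
      · constructor <;> (rw [e2]; split_ifs at e2 ⊢ <;> omega)
      · rw [e1, e2]; split_ifs <;> omega
    · intro p _ q _ heq
      have h1' := congrArg Prod.fst heq
      have h2' := congrArg Prod.snd heq
      simp only at h1' h2'
      exact Prod.ext ((Equiv.swap j (j + 1)).injective h1')
        ((Equiv.swap j (j + 1)).injective h2')
  have : invNum n (g * Equiv.swap j (j + 1)) = T.card := rfl
  have hSc : invNum n g = S.card := rfl
  by_cases hmem : (j, j + 1) ∈ T
  · have := Finset.card_erase_of_mem hmem
    omega
  · rw [Finset.erase_eq_of_notMem hmem] at key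
    omega

lemma invB {n j : ℕ} (g : Equiv.Perm ℕ) (h1 : 1 ≤ j) (h2 : j + 1 ≤ n)
    (hasc : g j < g (j + 1)) :
    invNum n g + 1 ≤ invNum n (g * Equiv.swap j (j + 1)) := by
  classical
  set T := ((Finset.Icc 1 n ×ˢ Finset.Icc 1 n).filter fun p : ℕ × ℕ =>
    p.1 < p.2 ∧ (g * Equiv.swap j (j + 1)) p.2 < (g * Equiv.swap j (j + 1)) p.1) with hT
  set S := ((Finset.Icc 1 n ×ˢ Finset.Icc 1 n).filter fun p : ℕ × ℕ =>
    p.1 < p.2 ∧ g p.2 < g p.1) with hS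
  have himg : (S.image fun p => (Equiv.swap j (j + 1) p.1, Equiv.swap j (j + 1) p.2)).card
      = S.card := by
    apply Finset.card_image_of_injOn
    intro p _ q _ heq
    have h1' := congrArg Prod.fst heq
    have h2' := congrArg Prod.snd heq
    simp only at h1' h2'
    exact Prod.ext ((Equiv.swap j (j + 1)).injective h1')
      ((Equiv.swap j (j + 1)).injective h2')
  have hnotmem : (j, j + 1) ∉ (S.image fun p => (Equiv.swap j (j + 1) p.1,
      Equiv.swap j (j + 1) p.2)) := by
    rw [Finset.mem_image]
    rintro ⟨p, hpS, heq⟩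
    have h1' := congrArg Prod.fst heq
    have h2' := congrArg Prod.snd heq
    simp only at h1' h2'
    have e1 := swap_eval j p.1
    have e2 := swap_eval j p.2
    rw [hS, Finset.mem_filter] at hpS
    have hlt := hpS.2.1
    rw [e1] at h1'; rw [e2] at h2'
    split_ifs at h1' h2' <;> omega
  have hsub : insert (j, j + 1) (S.image fun p => (Equiv.swap j (j + 1) p.1,
      Equiv.swap j (j + 1) p.2)) ⊆ T := by
    intro q hq
    rw [Finset.mem_insert] at hq
    rcases hq with rfl | hq
    · rw [hT, Finset.mem_filter, Finset.mem_product, Finset.mem_Icc, Finset.mem_Icc]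
      refine ⟨⟨⟨h1, by omega⟩, ⟨by omega, h2⟩⟩, by omega, ?_⟩
      show g (Equiv.swap j (j + 1) (j + 1)) < g (Equiv.swap j (j + 1) j)
      rw [Equiv.swap_apply_left, Equiv.swap_apply_right]
      exact hasc
    · rw [Finset.mem_image] at hq
      obtain ⟨p, hpS, rfl⟩ := hq
      rw [hS, Finset.mem_filter, Finset.mem_product, Finset.mem_Icc, Finset.mem_Icc] at hpS
      obtain ⟨⟨hr1, hr2⟩, hlt, hinv⟩ := hpS
      have hpne : ¬(p.1 = j ∧ p.2 = j + 1) := by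
        rintro ⟨ha, hb⟩
        rw [ha, hb] at hinv
        omega
      have e1 := swap_eval j p.1
      have e2 := swap_eval j p.2
      rw [hT, Finset.mem_filter, Finset.mem_product, Finset.mem_Icc, Finset.mem_Icc]
      refine ⟨⟨?_, ?_⟩, ?_, ?_⟩
      · constructor <;> (rw [e1]; split_ifs at e1 ⊢ <;> omega)
      · constructor <;> (rw [e2]; split_ifs at e2 ⊢ <;> omega)
      · rw [e1, e2]; split_ifs <;> omega
      · show g (Equiv.swap j (j + 1) (Equiv.swap j (j + 1) p.2))
            < g (Equiv.swap j (j + 1) (Equiv.swap j (j + 1) p.1))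
        rw [Equiv.swap_apply_self, Equiv.swap_apply_self]
        exact hinv
  have hcard := Finset.card_le_card hsub
  rw [Finset.card_insert_of_notMem hnotmem, himg] at hcard
  exact hcard

lemma inv_disp {n : ℕ} (g : Equiv.Perm ℕ)
    (hg : ∀ y, (1 ≤ g y ∧ g y ≤ n) ↔ (1 ≤ y ∧ y ≤ n))
    (x : ℕ) (hx1 : 1 ≤ x) (hx2 : x ≤ n) :
    g x - x ≤ ((Finset.Icc 1 n).filter fun b => x < b ∧ g b < g x).card := by
  classical
  by_cases hgx : g x ≤ x
  · have : g x - x = 0 := by omega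
    rw [this]; exact Nat.zero_le _
  push_neg at hgx
  have hgxn : g x ≤ n := ((hg x).2 ⟨hx1, hx2⟩).2
  have hsymm_range : ∀ y, 1 ≤ y → y ≤ n → 1 ≤ g.symm y ∧ g.symm y ≤ n := by
    intro y hy1 hy2
    have := (hg (g.symm y)).1
    rw [Equiv.apply_symm_apply] at this
    exact this ⟨hy1, hy2⟩
  have hcard1 : (Finset.Icc 1 (g x - 1)).card = g x - 1 := by
    rw [Nat.card_Icc]; omega
  have hneg : (((Finset.Icc 1 (g x - 1)).filter fun y => ¬ x < g.symm y)).card ≤ x - 1 := by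
    have hle : (((Finset.Icc 1 (g x - 1)).filter fun y => ¬ x < g.symm y)).card
        ≤ (Finset.Icc 1 (x - 1)).card := by
      apply Finset.card_le_card_of_injOn (fun y => g.symm y)
      case f_inj => intro p _ q _ heq; exact g.symm.injective heq
      intro y hy
      rw [Finset.mem_coe, Finset.mem_filter, Finset.mem_Icc] at hy
      obtain ⟨⟨hy1, hy2⟩, hy3⟩ := hy
      have hr := hsymm_range y hy1 (by omega)
      have hne : g.symm y ≠ x := by
        intro h
        have : y = g x := by rw [← Equiv.apply_symm_apply g y, h]
        omega
      rw [Finset.mem_coe, Finset.mem_Icc]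
      dsimp only
      omega
    rw [Nat.card_Icc] at hle
    omega
  have hpos : g x - x ≤ (((Finset.Icc 1 (g x - 1)).filter fun y => x < g.symm y)).card := by
    have := Finset.card_filter_add_card_filter_not
      (s := Finset.Icc 1 (g x - 1)) (p := fun y => x < g.symm y)
    omega
  refine le_trans hpos (Finset.card_le_card_of_injOn (fun y => g.symm y) ?_ ?_)
  · intro y hy
    rw [Finset.mem_coe, Finset.mem_filter, Finset.mem_Icc] at hy
    obtain ⟨⟨hy1, hy2⟩, hy3⟩ := hy
    have hr := hsymm_range y hy1 (by omega)
    rw [Finset.mem_coe, Finset.mem_filter, Finset.mem_Icc]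
    refine ⟨⟨hr.1, hr.2⟩, hy3, ?_⟩
    rw [Equiv.apply_symm_apply]
    omega
  · intro p _ q _ heq
    exact g.symm.injective heq

lemma zip_sum {n : ℕ} (l : List ℕ) : ∀ a, List.Chain' (· < ·) (a :: (l ++ [n])) →
    ∀ g : Equiv.Perm ℕ, (∀ p ∈ (a :: l).zip (l ++ [n]), g p.1 = p.2) →
    (((a :: l).map fun x => g x - x).sum) = n - a := by
  induction l with
  | nil =>
    intro a _ g hpair
    have : g a = n := hpair (a, n) (by simp)
    simp [this]
  | cons c t ih =>
    intro a hc g hpair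
    have hac : a < c := chain_head_lt hc c (by simp)
    have hcc : List.Chain' (· < ·) (c :: (t ++ [n])) := chain_tail hc
    have hcn : c < n := chain_head_lt hcc n (by simp)
    have hga : g a = c := hpair (a, c) (by
      have : (a :: c :: t).zip ((c :: t) ++ [n]) = (a, c) :: ((c :: t).zip (t ++ [n])) := rfl
      rw [this]; exact List.mem_cons_self)
    have htail : ((c :: t).map fun x => g x - x).sum = n - c := by
      apply ih c hcc g
      intro p hp
      apply hpair
      have : (a :: c :: t).zip ((c :: t) ++ [n]) = (a, c) :: ((c :: t).zip (t ++ [n])) := rfl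
      rw [this]
      exact List.mem_cons_of_mem _ hp
    have : ((a :: c :: t).map fun x => g x - x).sum
        = (g a - a) + ((c :: t).map fun x => g x - x).sum := by
      simp [List.map_cons, List.sum_cons]
    rw [this, htail, hga]
    omega

lemma inv_total {n : ℕ} (l : List ℕ) (hl : List.Chain' (· < ·) (1 :: (l ++ [n])))
    (g : Equiv.Perm ℕ) (hg : ∀ y, (1 ≤ g y ∧ g y ≤ n) ↔ (1 ≤ y ∧ y ≤ n))
    (hpair : ∀ p ∈ (1 :: l).zip (l ++ [n]), g p.1 = p.2) :
    n - 1 ≤ invNum n g := by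
  classical
  have hchain1 : List.Chain' (· < ·) (1 :: l) := by
    apply hl.sublist
    have : (1 :: l) ++ [n] = 1 :: (l ++ [n]) := rfl
    rw [← this]
    exact List.sublist_append_left _ _
  have hnodup : (1 :: l).Nodup := ((List.isChain_iff_pairwise).1 hchain1).nodup
  have hpw : List.Pairwise (· < ·) (1 :: (l ++ [n])) := (List.isChain_iff_pairwise).1 hl
  have hbound : ∀ x ∈ (1 :: l), 1 ≤ x ∧ x ≤ n := by
    intro x hx
    rcases List.mem_cons.1 hx with rfl | hx
    · have h1n : (1 : ℕ) < n := (List.pairwise_cons.1 hpw).1 n (by simp)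
      omega
    · have h1x : 1 < x := (List.pairwise_cons.1 hpw).1 x (by simp [hx])
      have hxn : x < n := by
        have hpw2 : List.Pairwise (· < ·) (l ++ [n]) := (List.pairwise_cons.1 hpw).2
        exact (List.pairwise_append.1 hpw2).2.2 x hx n (by simp)
      omega
  set C := (1 :: l).toFinset with hC
  set Inv := ((Finset.Icc 1 n ×ˢ Finset.Icc 1 n).filter fun p : ℕ × ℕ =>
    p.1 < p.2 ∧ g p.2 < g p.1) with hInv
  have fiber : ∀ x ∈ C, g x - x ≤ (Inv.filter fun p => p.1 = x).card := by
    intro x hxC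
    have hx := hbound x (List.mem_toFinset.1 hxC)
    refine le_trans (inv_disp g hg x hx.1 hx.2)
      (Finset.card_le_card_of_injOn (fun b => (x, b)) ?_ ?_)
    · intro b hb
      rw [Finset.mem_coe, Finset.mem_filter, Finset.mem_Icc] at hb
      rw [Finset.mem_coe, Finset.mem_filter, hInv, Finset.mem_filter, Finset.mem_product,
        Finset.mem_Icc, Finset.mem_Icc]
      exact ⟨⟨⟨⟨hx.1, hx.2⟩, ⟨hb.1.1, hb.1.2⟩⟩, hb.2.1, hb.2.2⟩, rfl⟩
    · intro p _ q _ heq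
      exact (congrArg Prod.snd heq :)
  have hfib : (Inv.filter fun p => p.1 ∈ C).card
      = ∑ x ∈ C, ((Inv.filter fun p => p.1 ∈ C).filter fun p => p.1 = x).card := by
    apply Finset.card_eq_sum_card_fiberwise
    intro p hp
    exact (Finset.mem_filter.1 hp).2
  have hfib2 : ∀ x ∈ C, ((Inv.filter fun p => p.1 ∈ C).filter fun p => p.1 = x)
      = Inv.filter fun p => p.1 = x := by
    intro x hxC
    rw [Finset.filter_filter]
    apply Finset.filter_congr
    intro p _
    constructor
    · rintro ⟨_, h⟩; exact h
    · rintro h; exact ⟨h ▸ hxC, h⟩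
  have hsum : ∑ x ∈ C, (g x - x) = n - 1 := by
    rw [hC, List.sum_toFinset _ hnodup]
    exact zip_sum l 1 hl g hpair
  have step1 : n - 1 ≤ ∑ x ∈ C, (Inv.filter fun p => p.1 = x).card := by
    rw [← hsum]
    exact Finset.sum_le_sum fiber
  have step2 : ∑ x ∈ C, (Inv.filter fun p => p.1 = x).card
      = (Inv.filter fun p => p.1 ∈ C).card := by
    rw [hfib]
    exact Finset.sum_congr rfl (fun x hx => by rw [hfib2 x hx])
  have step3 : (Inv.filter fun p => p.1 ∈ C).card ≤ Inv.card := Finset.card_filter_le _ _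
  have : invNum n g = Inv.card := rfl
  omega

lemma inv_word_le {n : ℕ} (L : List ℕ) (hL : ∀ i ∈ L, 1 ≤ i ∧ i ≤ n - 1) :
    ∀ g : Equiv.Perm ℕ, invNum n (g * Pi n (word n L)) ≤ invNum n g + L.length := by
  induction L with
  | nil =>
    intro g
    rw [word_nil, map_one, mul_one]
    simp
  | cons i L ihL =>
    intro g
    have hi := hL i (List.mem_cons_self)
    have hσ : Pi n (σb n i) = Equiv.swap i (i + 1) := by rw [Pi_sigma, pf, if_pos hi]
    have : g * Pi n (word n (i :: L)) = (g * Equiv.swap i (i + 1)) * Pi n (word n L) := by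
      rw [word_cons, map_mul, hσ, mul_assoc]
    rw [this]
    have h1 := ihL (fun j hj => hL j (List.mem_cons_of_mem i hj)) (g * Equiv.swap i (i + 1))
    have h2 := invA (n := n) g hi.1 (by omega)
    simp only [List.length_cons]
    omega

lemma Bpos_rep {n : ℕ} {x : B n} (hx : x ∈ Bpos n) :
    ∃ L, (∀ i ∈ L, 1 ≤ i ∧ i ≤ n - 1) ∧ x = word n L := by
  induction hx using Submonoid.closure_induction with
  | mem y hy =>
    obtain ⟨i, h1, h2, rfl⟩ := hy
    exact ⟨[i], by simp [h1, h2], by simp [word]⟩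
  | one => exact ⟨[], by simp, rfl⟩
  | mul y z _ _ ihy ihz =>
    obtain ⟨Ly, hLy, rfl⟩ := ihy
    obtain ⟨Lz, hLz, rfl⟩ := ihz
    refine ⟨Ly ++ Lz, ?_, by rw [word_append]⟩
    intro i hi
    rcases List.mem_append.1 hi with h | h
    · exact hLy i h
    · exact hLz i h

lemma word_mem_Bpos {n : ℕ} (L : List ℕ) (hL : ∀ i ∈ L, 1 ≤ i ∧ i ≤ n - 1) :
    word n L ∈ Bpos n := by
  induction L with
  | nil => exact one_mem _
  | cons i L ihL =>
    rw [word_cons]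
    exact mul_mem (Submonoid.subset_closure ⟨i, (hL i (List.mem_cons_self)).1,
      (hL i (List.mem_cons_self)).2, rfl⟩)
      (ihL fun j hj => hL j (List.mem_cons_of_mem i hj))
lemma comm_word {n j : ℕ} (h1 : 1 ≤ j) (L : List ℕ) (hL : ∀ i ∈ L, j + 2 ≤ i ∧ i ≤ n - 1) :
    σb n j * word n L = word n L * σb n j := by
  induction L with
  | nil => rw [word_nil, one_mul, mul_one]
  | cons i L ih =>
    have hi := hL i (List.mem_cons_self)
    rw [word_cons, ← mul_assoc, sigma_comm h1 hi.1 (by omega), mul_assoc,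
      ih (fun x hx => hL x (List.mem_cons_of_mem i hx)), ← mul_assoc]

lemma zip_first {n : ℕ} (l : List ℕ) : ∀ a, List.Chain' (· < ·) (a :: (l ++ [n])) →
    ∀ x ∈ a :: l, ∃ q, (x, q) ∈ (a :: l).zip (l ++ [n]) ∧ x < q := by
  induction l with
  | nil =>
    intro a hc x hx
    rw [List.mem_singleton] at hx
    subst hx
    exact ⟨n, by simp, chain_head_lt hc n (by simp)⟩
  | cons c t ih =>
    intro a hc x hx
    have hzip : (a :: c :: t).zip ((c :: t) ++ [n]) = (a, c) :: ((c :: t).zip (t ++ [n])) := rfl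
    rcases List.mem_cons.1 hx with rfl | hx
    · exact ⟨c, by rw [hzip]; exact List.mem_cons_self, chain_head_lt hc c (by simp)⟩
    · obtain ⟨q, hq, hlt⟩ := ih c (chain_tail hc) x hx
      exact ⟨q, by rw [hzip]; exact List.mem_cons_of_mem _ hq, hlt⟩

lemma zip_next_le {n : ℕ} (l : List ℕ) : ∀ a, List.Chain' (· < ·) (a :: (l ++ [n])) →
    ∀ x q, (x, q) ∈ (a :: l).zip (l ++ [n]) → ∀ y ∈ l, x < y → q ≤ y := by
  induction l with
  | nil => intro a _ x q _ y hy; simp at hy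
  | cons c t ih =>
    intro a hc x q hq y hy hxy
    have hzip : (a :: c :: t).zip ((c :: t) ++ [n]) = (a, c) :: ((c :: t).zip (t ++ [n])) := rfl
    rw [hzip, List.mem_cons] at hq
    rcases hq with heq | hq
    · injection heq with he1 he2
      subst he1; subst he2
      rcases List.mem_cons.1 hy with heq2 | hy
      · omega
      · exact le_of_lt (chain_head_lt (chain_tail hc) y (List.mem_append_left _ hy))
    · rcases List.mem_cons.1 hy with heq2 | hy
      · have hx1 : x ∈ c :: t := (List.of_mem_zip hq).1
        have hcx : c ≤ x := by
          rcases List.mem_cons.1 hx1 with heq3 | h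
          · omega
          · exact le_of_lt (chain_head_lt (chain_tail hc) x (List.mem_append_left _ h))
        omega
      · exact ih c (chain_tail hc) x q hq y hy hxy
/-- the finishing set of `δ_{d_1,…,d_m}` is
`{ j ∈ {1,…,n−1} : j ∈ {1} ∪ D and j+1 ∉ D }`, where `D = {d_1,…,d_m}`. -/
theorem statement1 (n : ℕ) (hn : 3 ≤ n) (l : List ℕ)
    (hl : List.Chain' (· < ·) (1 :: (l ++ [n]))) :
    finishSet n (deltaD n l) =
      { j | 1 ≤ j ∧ j ≤ n - 1 ∧ (j = 1 ∨ j ∈ l) ∧ j + 1 ∉ l } := by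
  have hsegs_mem := segs_mem (n := n) l 1 le_rfl hl
  have hsegs_mem' : ∀ i ∈ segs n 1 l, 1 ≤ i ∧ i ≤ n - 1 := fun i hi => hsegs_mem i hi
  have hlen := segs_length (n := n) l 1 le_rfl hl
  have hdd := deltaD_eq_segs n l
  ext j
  simp only [finishSet, Set.mem_setOf_eq]
  constructor
  · rintro ⟨hj1, hj2, hpos⟩
    refine ⟨hj1, hj2, ?_⟩
    by_contra hbad
    have hpos' : deltaD n l * (σb n j)⁻¹ ∈ Bpos n := hpos
    obtain ⟨L, hL, hLeq⟩ := Bpos_rep hpos'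
    have hEq : deltaD n l = word n L * σb n j := by
      rw [← inv_mul_cancel_right (deltaD n l) (σb n j), hLeq]
    -- length of L
    have hlenL : L.length = n - 2 := by
      have e1 : Ee n (deltaD n l) = Multiplicative.ofAdd (((n - 1 : ℕ) : ℤ)) := by
        rw [hdd, Ee_word n _ hsegs_mem', hlen]
      have e2 : Ee n (deltaD n l) = Multiplicative.ofAdd ((L.length : ℤ) + 1) := by
        rw [hEq, map_mul, Ee_word n L hL, Ee_sigma, ef, if_pos ⟨hj1, hj2⟩, ← ofAdd_add]
      have e3 : (((n - 1 : ℕ) : ℤ)) = (L.length : ℤ) + 1 :=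
        Multiplicative.ofAdd.injective (e1.symm.trans e2)
      omega
    -- permutation facts
    obtain ⟨f1, f2, f3, f4⟩ := segs_facts (n := n) l 1 le_rfl hl
    set v := Pi n (word n (segs n 1 l)) with hv
    have hσ : Pi n (σb n j) = Equiv.swap j (j + 1) := by
      rw [Pi_sigma, pf, if_pos ⟨hj1, hj2⟩]
    have hvs : v * Equiv.swap j (j + 1) = Pi n (word n L) := by
      have h1 : v = Pi n (word n L) * Equiv.swap j (j + 1) := by
        rw [hv, ← hdd, hEq, map_mul, hσ]
      rw [h1, mul_assoc, Equiv.swap_mul_self, mul_one]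
    -- the bad index is an ascent of v
    have hasc : v j < v (j + 1) := by
      by_cases hjc : j = 1 ∨ j ∈ l
      · have hj1l : j + 1 ∈ l := by tauto
        have hjmem : j ∈ 1 :: l := by
          rcases hjc with rfl | h
          · exact List.mem_cons_self
          · exact List.mem_cons_of_mem _ h
        obtain ⟨q, hq, hxq⟩ := zip_first l 1 hl j hjmem
        have hvj : v j = q := f2 (j, q) hq
        have hqle : q ≤ j + 1 := zip_next_le l 1 hl j q hq (j + 1) hj1l (by omega)
        obtain ⟨q', hq', hgt'⟩ := zip_first l 1 hl (j + 1) (List.mem_cons_of_mem _ hj1l)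
        have hvj1 : v (j + 1) = q' := f2 (j + 1, q') hq'
        omega
      · push_neg at hjc
        have hvj : v j < j := f3 j (by omega) (by omega) hjc.2
        by_cases hj1l : j + 1 ∈ l
        · obtain ⟨q', hq', hgt'⟩ := zip_first l 1 hl (j + 1) (List.mem_cons_of_mem _ hj1l)
          have hvj1 : v (j + 1) = q' := f2 (j + 1, q') hq'
          omega
        · have hvj1 : v (j + 1) = j := by
            have := f4 (j + 1) (by omega) (by omega) hj1l
              (by simpa using hjc.2)
            simpa using this
          omega
    -- inversion counting
    have hrange : ∀ y, (1 ≤ v y ∧ v y ≤ n) ↔ (1 ≤ y ∧ y ≤ n) :=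
      word_range _ hsegs_mem'
    have hlow : n - 1 ≤ invNum n v := inv_total l hl v hrange f2
    have hstep : invNum n v + 1 ≤ invNum n (v * Equiv.swap j (j + 1)) :=
      invB v hj1 (by omega) hasc
    have hup : invNum n (Pi n (word n L)) ≤ L.length := by
      have h1 := inv_word_le L hL 1
      rw [one_mul, invNum_one] at h1
      omega
    rw [hvs] at hstep
    omega
  · rintro ⟨hj1, hj2, hj3, hj4⟩
    refine ⟨hj1, hj2, ?_⟩
    obtain ⟨A, Bt, hAB, hBt⟩ := segs_split (n := n) l 1 le_rfl hl j hj3 hj4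
    have hBt' : ∀ i ∈ Bt, j + 2 ≤ i ∧ i ≤ n - 1 := by
      intro i hi
      have hmem : i ∈ segs n 1 l := by
        rw [hAB]
        exact List.mem_append_right _ (List.mem_cons_of_mem _ hi)
      exact ⟨hBt i hi, (hsegs_mem i hmem).2⟩
    show deltaD n l * (σb n j)⁻¹ ∈ Bpos n
    have hkey : deltaD n l * (σb n j)⁻¹ = word n (A ++ Bt) := by
      rw [hdd, hAB, word_append, word_cons, comm_word hj1 Bt hBt', word_append]
      group
    rw [hkey]
    apply word_mem_Bpos
    intro i hi
    rcases List.mem_append.1 hi with h | h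
    · exact hsegs_mem i (by rw [hAB]; exact List.mem_append_left _ h)
    · refine hsegs_mem i ?_
      rw [hAB]
      exact List.mem_append_right _ (List.mem_cons_of_mem _ h)
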